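/- Fix an admissible sequence of probability measures ν_n on Δ^{n-1}, integers p ≥ 0 and k ≥ 1. Let F_n : Δ^{n-1} → ℝ be measurable with F_n = B_n := ∑_{i=0}^p C(n-1,i) on Γ_{p+2} and 0 ≤ F_n ≤ 2(n-1)^p everywhere. Then there exist C > 0 and 0 < a < 1 such that |∫_{Δ^{n-1}} F_n^k dν_n − B_n^k| < C·a^n for all n ≥ 3. -/

import Mathlib

/-!
On `Γ_{p+2}` the integrand `F^k` equals `B^k`, and on the whole simplex both `F^k` and `B^k` lie in
`[0, (2(m+1)^p)^k]`; so the error is at most `(2(m+1)^p)^k · ν(Δ \ Γ_{p+2})`.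

A point of `Δ \ Γ_q` has a `q`-subset `J` with `∑_J ℓ ≥ 1/2`, so some coordinate is `≥ 1/(2q)` and the
density is at most `A b^{m+1}` there. In the chart `emb`, the set `{∑_J ℓ ≥ 1/2}` lies in the product
of a unit cube with a corner simplex `{x ≥ 0, ∑ x ≤ 1/2}` in `m - q` coordinates outside `J`, of
volume at most `2^{-(m-q)}/(m-q)!`. Summing over the `C(m+1, q)` subsets,
`μ(Δ \ Γ_q) ≤ (m+1)^{2q} 2^q / 2^m`, and the error is a polynomial in `m` times `(b/2)^m`, `b < 2`.
-/

open MeasureTheory Finset Filter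

/-- The open standard simplex Δ^m ⊂ ℝ^{m+1}. -/
def Simplex (m : ℕ) : Set (Fin (m+1) → ℝ) :=
  {ℓ | (∀ i, 0 < ℓ i) ∧ ∑ i, ℓ i = 1}

/-- Parametrization of the hyperplane ∑ ℓ i = 1 by ℝ^m. -/
noncomputable def emb (m : ℕ) (x : Fin m → ℝ) : Fin (m+1) → ℝ :=
  Fin.snoc x (1 - ∑ i, x i)

/-- Normalized Lebesgue measure of a subset of the simplex Δ^m,
computed as a ratio of Lebesgue volumes in the parametrizing chart. -/
noncomputable def simplexMeasure (m : ℕ) (A : Set (Fin (m+1) → ℝ)) : ENNReal :=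
  volume (emb m ⁻¹' A) / volume (emb m ⁻¹' (Simplex m))

/-- The set Γ_p of length vectors for which every p-element subset is short. -/
def Gamma (m p : ℕ) : Set (Fin (m+1) → ℝ) :=
  {ℓ ∈ Simplex m | ∀ J : Finset (Fin (m+1)), J.card = p → ∑ i ∈ J, ℓ i < 1/2}

/-- The set Λ_p where some coordinate is ≥ 1/(2p). -/
def Lambda (m p : ℕ) : Set (Fin (m+1) → ℝ) :=
  {ℓ ∈ Simplex m | ∃ i, 1/(2*(p:ℝ)) ≤ ℓ i}

/-- The normalized Lebesgue measure μ_n on the simplex Δ^m ⊂ ℝ^{m+1},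
as an actual measure on ℝ^{m+1} (supported on the simplex). -/
noncomputable def simplexProb (m : ℕ) : Measure (Fin (m+1) → ℝ) :=
  (m.factorial : ENNReal) • Measure.map (emb m) (volume.restrict (emb m ⁻¹' Simplex m))

lemma abs_integral_sub_le_of_eqOn {α : Type*} [MeasurableSpace α] {ν : Measure α}
    [IsProbabilityMeasure ν] {g : α → ℝ} {s : Set α} {c M : ℝ} (hs : MeasurableSet s)
    (hg : AEStronglyMeasurable g ν) (hgM : ∀ᵐ x ∂ν, |g x - c| ≤ M)
    (hgc : ∀ x ∈ s, g x = c) :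
    |∫ x, g x ∂ν - c| ≤ M * ν.real sᶜ := by
  have hint : Integrable (fun x => g x - c) ν :=
    .of_bound (hg.sub aestronglyMeasurable_const) M hgM
  have hgi : Integrable g ν :=
    (hint.add (integrable_const c)).congr (ae_of_all _ fun x => sub_add_cancel (g x) c)
  have hzero : ∫ x in s, g x - c ∂ν = 0 :=
    setIntegral_eq_zero_of_forall_eq_zero fun x hx => sub_eq_zero.2 (hgc x hx)
  have h := norm_integral_sub_setIntegral_le hgM hs hint
  rw [hzero, sub_zero, integral_sub hgi (integrable_const c), integral_const, probReal_univ,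
    one_smul] at h
  simpa [mul_comm] using h

lemma exists_pow_mul_pow_le (D : ℕ) {r a : ℝ} (hr : 0 ≤ r) (hra : r < a) :
    ∃ C ≥ 0, ∀ n : ℕ, (n : ℝ) ^ D * r ^ n ≤ C * a ^ n := by
  have ha : 0 < a := hr.trans_lt hra
  obtain ⟨C, hC⟩ := (tendsto_pow_const_mul_const_pow_of_lt_one D (div_nonneg hr ha.le)
    ((div_lt_one ha).2 hra)).bddAbove_range
  have hbound : ∀ n : ℕ, (n : ℝ) ^ D * (r / a) ^ n ≤ C := fun n => hC (Set.mem_range_self n)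
  refine ⟨C, (by positivity : (0 : ℝ) ≤ (0 : ℕ) ^ D * (r / a) ^ 0).trans (hbound 0), fun n => ?_⟩
  calc (n : ℝ) ^ D * r ^ n = (n ^ D * (r / a) ^ n) * a ^ n := by rw [div_pow]; field_simp
    _ ≤ C * a ^ n := by gcongr; exact hbound n

lemma sum_range_choose_le_pow (m p : ℕ) :
    ∑ i ∈ range (p + 1), m.choose i ≤ (m + 1) ^ p := by
  induction p with
  | zero => simp
  | succ p ih =>
    rw [sum_range_succ, pow_succ, mul_add_one, add_comm ((m + 1) ^ p * m)]
    refine add_le_add ih ?_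
    calc m.choose (p + 1) ≤ m ^ (p + 1) := Nat.choose_le_pow m (p + 1)
      _ ≤ (m + 1) ^ p * m := by rw [pow_succ]; gcongr; exact m.le_succ

lemma abs_pow_sub_sum_range_choose_pow_le {m p : ℕ} (k : ℕ) {x : ℝ} (hx0 : 0 ≤ x)
    (hx : x ≤ 2 * m ^ p) :
    |x ^ k - (∑ i ∈ range (p + 1), (m.choose i : ℝ)) ^ k| ≤ (2 * (m + 1) ^ p) ^ k := by
  have hB : ∑ i ∈ range (p + 1), (m.choose i : ℝ) ≤ (m + 1) ^ p := by
    exact_mod_cast sum_range_choose_le_pow m p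
  have hpow : (0 : ℝ) ≤ (m + 1) ^ p := by positivity
  refine abs_sub_le_of_nonneg_of_le (by positivity) (pow_le_pow_left₀ hx0 ?_ k) (by positivity)
    (pow_le_pow_left₀ (by positivity) (by linarith) k)
  exact hx.trans (by gcongr; linarith)

lemma factorial_le_factorial_sub_mul_pow (m q : ℕ) :
    m.factorial ≤ (m - q).factorial * (m + 1) ^ q := by
  rcases le_total q m with h | h
  · rw [← Nat.factorial_mul_descFactorial h]
    gcongr
    exact (Nat.descFactorial_le_pow m q).trans (Nat.pow_le_pow_left m.le_succ q)
  · rw [Nat.sub_eq_zero_of_le h, Nat.factorial_zero, one_mul]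
    calc m.factorial ≤ m ^ m := Nat.factorial_le_pow m
      _ ≤ (m + 1) ^ q :=
        (Nat.pow_le_pow_left m.le_succ m).trans (Nat.pow_le_pow_right m.succ_pos h)

lemma factorial_mul_half_pow_div_le (m q : ℕ) :
    (m.factorial : ℝ) * ((1 / 2) ^ (m - q) / (m - q).factorial) ≤
      (m + 1) ^ q * 2 ^ q / 2 ^ m := by
  have h2 : 2 ^ m ≤ 2 ^ (m - q) * 2 ^ q := by
    rw [← pow_add]; exact Nat.pow_le_pow_right two_pos (by omega)
  have key := Nat.mul_le_mul (factorial_le_factorial_sub_mul_pow m q) h2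
  rw [one_div_pow, div_div, mul_one_div, div_le_div_iff₀ (by positivity) (by positivity)]
  calc (m.factorial * 2 ^ m : ℝ)
        ≤ ((m - q).factorial * (m + 1) ^ q * (2 ^ (m - q) * 2 ^ q) : ℕ) := by exact_mod_cast key
    _ = _ := by push_cast; ring

def corner (ι : Type*) [Fintype ι] (c : ℝ) : Set (ι → ℝ) :=
  {x | (∀ i, 0 ≤ x i) ∧ ∑ i, x i ≤ c}

lemma corner_eq_empty {ι : Type*} [Fintype ι] {c : ℝ} (hc : c < 0) : corner ι c = ∅ :=
  Set.eq_empty_of_forall_notMem fun _ hx =>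
    hc.not_ge ((Finset.sum_nonneg fun i _ => hx.1 i).trans hx.2)

lemma piFinSuccAbove_preimage_corner (d : ℕ) (c : ℝ) :
    MeasurableEquiv.piFinSuccAbove (fun _ : Fin (d + 1) => ℝ) 0 ⁻¹'
      {ty | 0 ≤ ty.1 ∧ ty.2 ∈ corner (Fin d) (c - ty.1)} = corner (Fin (d + 1)) c := by
  ext x
  simp [corner, Fin.forall_fin_succ, Fin.sum_univ_succ, le_sub_iff_add_le', and_assoc, Fin.tail]

lemma integral_sub_pow_div_factorial {c : ℝ} (hc : 0 ≤ c) (d : ℕ) :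
    ∫ t in Set.Icc 0 c, (c - t) ^ d / d.factorial = c ^ (d + 1) / (d + 1).factorial := by
  rw [integral_Icc_eq_integral_Ioc, ← intervalIntegral.integral_of_le hc,
    intervalIntegral.integral_div, intervalIntegral.integral_comp_sub_left (fun x => x ^ d) c]
  simp only [sub_self, sub_zero, integral_pow, ne_eq, Nat.add_eq_zero_iff, one_ne_zero, and_false,
    not_false_eq_true, zero_pow, Nat.factorial_succ, Nat.cast_mul, Nat.cast_add, Nat.cast_one]
  field_simp

lemma volume_corner_fin_le (d : ℕ) {c : ℝ} (hc : 0 ≤ c) :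
    volume (corner (Fin d) c) ≤ ENNReal.ofReal (c ^ d / d.factorial) := by
  induction d generalizing c with
  | zero =>
    calc volume (corner (Fin 0) c) ≤ volume (Set.univ : Set (Fin 0 → ℝ)) :=
          measure_mono (Set.subset_univ _)
      _ = ENNReal.ofReal (c ^ 0 / (0 : ℕ).factorial) := by
        rw [← Set.pi_univ, volume_pi_pi]; simp
  | succ d ih =>
    set B : Set (ℝ × (Fin d → ℝ)) := {ty | 0 ≤ ty.1 ∧ ty.2 ∈ corner (Fin d) (c - ty.1)}
    have hB : MeasurableSet B := by
      simp only [B, corner]; measurability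
    have hslice : ∀ t, volume (Prod.mk t ⁻¹' B) ≤
        (Set.Icc 0 c).indicator (fun t => ENNReal.ofReal ((c - t) ^ d / d.factorial)) t := by
      intro t
      by_cases ht : t ∈ Set.Icc 0 c
      · rw [Set.indicator_of_mem ht]
        exact (measure_mono fun y hy => hy.2).trans (ih (sub_nonneg.2 ht.2))
      · have hempty : Prod.mk t ⁻¹' B = ∅ := Set.eq_empty_of_forall_notMem fun _ ⟨h0, hy⟩ => by
          have hct : c - t < 0 := by linarith [not_and.1 ht h0]
          rwa [corner_eq_empty hct] at hy
        simp [hempty, Set.indicator_of_notMem ht]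
    rw [← piFinSuccAbove_preimage_corner,
      (volume_preserving_piFinSuccAbove _ 0).measure_preimage_equiv, Measure.volume_eq_prod,
      Measure.prod_apply hB]
    calc ∫⁻ t, volume (Prod.mk t ⁻¹' B)
        ≤ ∫⁻ t in Set.Icc 0 c, ENNReal.ofReal ((c - t) ^ d / d.factorial) := by
          rw [← lintegral_indicator measurableSet_Icc]; exact lintegral_mono hslice
      _ = ENNReal.ofReal (c ^ (d + 1) / (d + 1).factorial) := by
        rw [← integral_sub_pow_div_factorial hc, ofReal_integral_eq_lintegral_ofReal]
        · exact (by fun_prop : Continuous fun t : ℝ => (c - t) ^ d / d.factorial).integrableOn_Icc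
        · filter_upwards [ae_restrict_mem measurableSet_Icc] with t ht
          have : 0 ≤ c - t := sub_nonneg.2 ht.2
          positivity

lemma volume_corner_le (ι : Type*) [Fintype ι] {c : ℝ} (hc : 0 ≤ c) :
    volume (corner ι c) ≤ ENNReal.ofReal (c ^ Fintype.card ι / (Fintype.card ι).factorial) := by
  let e := (Fintype.equivFin ι).symm
  have hpre : MeasurableEquiv.piCongrLeft (fun _ => ℝ) e ⁻¹' corner ι c =
      corner (Fin (Fintype.card ι)) c := by
    ext x
    simp only [corner, Set.mem_preimage, Set.mem_ofPred_eq, e.forall_congr_right.symm,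
      ← e.sum_comp, MeasurableEquiv.coe_piCongrLeft, Equiv.piCongrLeft_apply_apply]
  rw [← (volume_measurePreserving_piCongrLeft _ e).measure_preimage_equiv, hpre]
  exact volume_corner_fin_le _ hc

lemma volume_cube_inter_sum_le {ι : Type*} [Fintype ι] [DecidableEq ι] (K : Finset ι) {c : ℝ}
    (hc : 0 ≤ c) :
    volume {x : ι → ℝ | (∀ i, x i ∈ Set.Icc 0 1) ∧ ∑ i ∈ K, x i ≤ c}
      ≤ ENNReal.ofReal (c ^ K.card / K.card.factorial) := by
  let e := MeasurableEquiv.piEquivPiSubtypeProd (fun _ : ι => ℝ) (· ∈ K)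
  have hsub : {x : ι → ℝ | (∀ i, x i ∈ Set.Icc 0 1) ∧ ∑ i ∈ K, x i ≤ c} ⊆
      e ⁻¹' (corner K c ×ˢ Set.univ.pi fun _ => Set.Icc 0 1) := by
    rintro x ⟨hx1, hx2⟩
    refine ⟨⟨fun i => (hx1 i).1, ?_⟩, fun i _ => hx1 i⟩
    simpa [e, Finset.sum_attach K x] using hx2
  calc _ ≤ volume (e ⁻¹' (corner K c ×ˢ Set.univ.pi fun _ => Set.Icc 0 1)) :=
        measure_mono hsub
    _ = volume (corner K c) * 1 := by
      rw [(volume_preserving_piEquivPiSubtypeProd _ _).measure_preimage_equiv,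
        Measure.volume_eq_prod, Measure.prod_prod, volume_pi_pi]
      simp only [Real.volume_Icc, sub_zero, ENNReal.ofReal_one, Finset.prod_const_one]
      congr!
    _ ≤ _ := by simpa using volume_corner_le K hc

lemma measurable_emb (m : ℕ) : Measurable (emb m) := by
  unfold emb; fun_prop

lemma measurableSet_simplex (m : ℕ) : MeasurableSet (Simplex m) := by
  unfold Simplex; measurability

lemma measurableSet_gamma (m q : ℕ) : MeasurableSet (Gamma m q) := by
  refine (measurableSet_simplex m).inter ?_
  change MeasurableSet
    {ℓ : Fin (m + 1) → ℝ | ∀ J : Finset (Fin (m + 1)), J.card = q → ∑ i ∈ J, ℓ i < 1 / 2}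
  simp only [Set.ofPred_forall]
  exact .iInter fun J => .iInter fun _ => measurableSet_lt (by fun_prop) measurable_const

lemma ae_mem_simplex (m : ℕ) : ∀ᵐ ℓ ∂simplexProb m, ℓ ∈ Simplex m := by
  refine Measure.ae_smul_measure ?_ _
  exact (ae_map_iff (measurable_emb m).aemeasurable (measurableSet_simplex m)).2 <|
    ae_restrict_mem (measurable_emb m (measurableSet_simplex m))

lemma simplexProb_le (m : ℕ) {S : Set (Fin (m + 1) → ℝ)} (hS : MeasurableSet S) :
    simplexProb m S ≤ m.factorial * volume (emb m ⁻¹' S) := by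
  rw [simplexProb, Measure.smul_apply, Measure.map_apply (measurable_emb m) hS, smul_eq_mul]
  exact mul_le_mul_right (Measure.restrict_apply_le _ _) _

def longSet (m : ℕ) (J : Finset (Fin (m + 1))) : Set (Fin (m + 1) → ℝ) :=
  {ℓ ∈ Simplex m | 1 / 2 ≤ ∑ i ∈ J, ℓ i}

lemma measurableSet_longSet (m : ℕ) (J : Finset (Fin (m + 1))) : MeasurableSet (longSet m J) :=
  (measurableSet_simplex m).inter <|
    measurableSet_le measurable_const (Finset.measurable_sum J fun i _ => measurable_pi_apply i)

lemma exists_castSucc_notMem_card_eq (m : ℕ) (J : Finset (Fin (m + 1))) :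
    ∃ K : Finset (Fin m), (∀ i ∈ K, i.castSucc ∉ J) ∧ K.card = m - J.card := by
  classical
  have hJ : #(univ.filter fun i : Fin m => i.castSucc ∈ J) ≤ #J :=
    card_le_card_of_injOn _ (fun i hi => (mem_filter.1 hi).2) (Fin.castSucc_injective m).injOn
  have hsplit := card_filter_add_card_filter_not (s := univ) (fun i : Fin m => i.castSucc ∈ J)
  rw [card_univ, Fintype.card_fin] at hsplit
  obtain ⟨K, hKsub, hK⟩ := exists_subset_card_eq
    (s := univ.filter fun i : Fin m => i.castSucc ∉ J) (n := m - #J) (by omega)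
  exact ⟨K, fun i hi => (mem_filter.1 (hKsub hi)).2, hK⟩

lemma emb_preimage_longSet_subset (m : ℕ) {J : Finset (Fin (m + 1))} {K : Finset (Fin m)}
    (hK : ∀ i ∈ K, i.castSucc ∉ J) :
    emb m ⁻¹' longSet m J ⊆
      {x | (∀ i, x i ∈ Set.Icc 0 1) ∧ ∑ i ∈ K, x i ≤ 1 / 2} := by
  rintro x ⟨⟨hpos, hsum⟩, hJ⟩
  have hle : ∀ i, emb m x i ≤ 1 := fun i =>
    hsum ▸ single_le_sum (fun j _ => (hpos j).le) (mem_univ i)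
  have hcompl := sum_add_sum_compl J (emb m x)
  refine ⟨fun i => by simpa [emb] using And.intro (hpos i.castSucc).le (hle i.castSucc), ?_⟩
  calc ∑ i ∈ K, x i = ∑ i ∈ K.map Fin.castSuccEmb, emb m x i := by simp [emb]
    _ ≤ ∑ i ∈ Jᶜ, emb m x i := by
      refine sum_le_sum_of_subset_of_nonneg (fun i hi => ?_) (fun j _ _ => (hpos j).le)
      obtain ⟨j, hj, rfl⟩ := mem_map.1 hi
      exact mem_compl.2 (hK j hj)
    _ ≤ 1 / 2 := by linarith

lemma simplexProb_longSet_le (m : ℕ) (J : Finset (Fin (m + 1))) :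
    simplexProb m (longSet m J) ≤
      m.factorial * ENNReal.ofReal ((1 / 2) ^ (m - #J) / (m - #J).factorial) := by
  classical
  obtain ⟨K, hKJ, hK⟩ := exists_castSucc_notMem_card_eq m J
  calc _ ≤ m.factorial * volume (emb m ⁻¹' longSet m J) :=
        simplexProb_le m (measurableSet_longSet m J)
    _ ≤ m.factorial *
          volume {x : Fin m → ℝ | (∀ i, x i ∈ Set.Icc 0 1) ∧ ∑ i ∈ K, x i ≤ 1 / 2} := by
        gcongr; exact emb_preimage_longSet_subset m hKJ
    _ ≤ _ := by
        gcongr; simpa [hK] using volume_cube_inter_sum_le K (by norm_num : (0 : ℝ) ≤ 1 / 2)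

lemma exists_mem_longSet_of_mem_simplex_diff_gamma {m q : ℕ} {ℓ : Fin (m + 1) → ℝ}
    (h : ℓ ∈ Simplex m \ Gamma m q) :
    ∃ J : Finset (Fin (m + 1)), #J = q ∧ ℓ ∈ longSet m J := by
  simpa [Gamma, longSet, h.1] using h.2

lemma simplex_diff_gamma_subset (m q : ℕ) :
    Simplex m \ Gamma m q ⊆
      ⋃ J ∈ (univ : Finset (Fin (m + 1))).powersetCard q, longSet m J := by
  intro ℓ hℓ
  obtain ⟨J, hJ, hℓJ⟩ := exists_mem_longSet_of_mem_simplex_diff_gamma hℓ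
  exact Set.mem_biUnion (mem_powersetCard_univ.2 hJ) hℓJ

lemma simplexProb_simplex_diff_gamma_le (m q : ℕ) :
    simplexProb m (Simplex m \ Gamma m q) ≤
      ENNReal.ofReal ((m + 1) ^ (2 * q) * 2 ^ q / 2 ^ m) := by
  calc _ ≤ ∑ J ∈ (univ : Finset (Fin (m + 1))).powersetCard q,
          simplexProb m (longSet m J) :=
        (measure_mono (simplex_diff_gamma_subset m q)).trans (measure_biUnion_finset_le _ _)
    _ ≤ ∑ J ∈ (univ : Finset (Fin (m + 1))).powersetCard q,
          m.factorial * ENNReal.ofReal ((1 / 2) ^ (m - q) / (m - q).factorial) :=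
        sum_le_sum fun J hJ => mem_powersetCard_univ.1 hJ ▸ simplexProb_longSet_le m J
    _ = ENNReal.ofReal
          ((m + 1).choose q * (m.factorial * ((1 / 2) ^ (m - q) / (m - q).factorial))) := by
        rw [sum_const, card_powersetCard, card_univ, Fintype.card_fin, nsmul_eq_mul,
          ENNReal.ofReal_mul (by positivity), ENNReal.ofReal_mul (by positivity),
          ENNReal.ofReal_natCast, ENNReal.ofReal_natCast]
    _ ≤ _ := by
        refine ENNReal.ofReal_le_ofReal ?_
        calc _ ≤ ((m + 1) ^ q : ℝ) * ((m + 1) ^ q * 2 ^ q / 2 ^ m) := by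
              gcongr
              · exact_mod_cast Nat.choose_le_pow (m + 1) q
              · exact factorial_mul_half_pow_div_le m q
          _ = _ := by ring

lemma simplex_diff_gamma_subset_lambda {m q : ℕ} (hq : 1 ≤ q) :
    Simplex m \ Gamma m q ⊆ Lambda m q := by
  intro ℓ hℓ
  obtain ⟨J, hJ, -, hsum⟩ := exists_mem_longSet_of_mem_simplex_diff_gamma hℓ
  have hJq : ∑ _i ∈ J, 1 / (2 * (q : ℝ)) = 1 / 2 := by
    rw [sum_const, hJ, nsmul_eq_mul]; field_simp
  obtain ⟨i, -, hi⟩ := exists_le_of_sum_le (card_pos.1 (by omega)) (hJq.trans_le hsum)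
  exact ⟨hℓ.1, i, hi⟩

lemma withDensity_compl_gamma_le {m q : ℕ} (hq : 1 ≤ q) {f : (Fin (m + 1) → ℝ) → ℝ} {R : ℝ}
    (hf : ∀ ℓ ∈ Lambda m q, f ℓ ≤ R) :
    (simplexProb m).withDensity (fun ℓ => ENNReal.ofReal (f ℓ)) (Gamma m q)ᶜ ≤
      ENNReal.ofReal (R * ((m + 1) ^ (2 * q) * 2 ^ q / 2 ^ m)) := by
  set ν := (simplexProb m).withDensity fun ℓ => ENNReal.ofReal (f ℓ)
  have hae : (Gamma m q)ᶜ ≤ᵐ[ν] (Simplex m \ Gamma m q : Set _) := by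
    filter_upwards [(withDensity_absolutelyContinuous _ _).ae_le (ae_mem_simplex m)]
      with ℓ hℓ hΓ using ⟨hℓ, hΓ⟩
  calc ν (Gamma m q)ᶜ ≤ ν (Simplex m \ Gamma m q) := measure_mono_ae hae
    _ = ∫⁻ ℓ in Simplex m \ Gamma m q, ENNReal.ofReal (f ℓ) ∂simplexProb m :=
        withDensity_apply _ ((measurableSet_simplex m).diff (measurableSet_gamma m q))
    _ ≤ ∫⁻ _ in Simplex m \ Gamma m q, ENNReal.ofReal R ∂simplexProb m :=
        setLIntegral_mono measurable_const fun ℓ hℓ =>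
          ENNReal.ofReal_le_ofReal (hf ℓ (simplex_diff_gamma_subset_lambda hq hℓ))
    _ = ENNReal.ofReal R * simplexProb m (Simplex m \ Gamma m q) := setLIntegral_const _ _
    _ ≤ _ := by
        rw [ENNReal.ofReal_mul' (by positivity)]
        gcongr
        exact simplexProb_simplex_diff_gamma_le m q

theorem stmt17_general (f : (m : ℕ) → (Fin (m+1) → ℝ) → ℝ)
    (hprob : ∀ m, ∫⁻ ℓ, ENNReal.ofReal (f m ℓ) ∂(simplexProb m) = 1)
    (hadm : ∀ p : ℕ, 1 ≤ p → ∃ A > (0:ℝ), ∃ b ∈ Set.Ioo (0:ℝ) 2,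
        ∀ m : ℕ, ∀ ℓ ∈ Lambda m p, f m ℓ ≤ A * b^(m+1))
    (p k : ℕ) (F : (m : ℕ) → (Fin (m+1) → ℝ) → ℝ)
    (hFmeas : ∀ m, Measurable (F m))
    (hFconst : ∀ m : ℕ, ∀ ℓ ∈ Gamma m (p+2),
        F m ℓ = ∑ i ∈ Finset.range (p+1), (Nat.choose m i : ℝ))
    (hFbd : ∀ m : ℕ, ∀ ℓ ∈ Simplex m, 0 ≤ F m ℓ ∧ F m ℓ ≤ 2 * (m:ℝ)^p) :
    ∃ C > (0:ℝ), ∃ a ∈ Set.Ioo (0:ℝ) 1, ∀ m : ℕ, 2 ≤ m →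
      |(∫ ℓ, (F m ℓ)^k
            ∂((simplexProb m).withDensity (fun ℓ => ENNReal.ofReal (f m ℓ))))
          - (∑ i ∈ Finset.range (p+1), (Nat.choose m i : ℝ))^k|
        < C * a^(m+1) := by
  obtain ⟨A, hA, b, ⟨hb0, hb2⟩, hfΛ⟩ := hadm (p + 2) (by omega)
  obtain ⟨a, hba, ha1⟩ := exists_between (by linarith : b / 2 < 1)
  have ha : 0 < a := by linarith
  obtain ⟨C, hC0, hC⟩ := exists_pow_mul_pow_le (p * k + 2 * (p + 2)) (by positivity) hba
  set K : ℝ := 2 ^ k * A * 2 ^ (p + 3)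
  refine ⟨K * C + 1, by positivity, a, ⟨ha, ha1⟩, fun m _ => ?_⟩
  set ν := (simplexProb m).withDensity fun ℓ => ENNReal.ofReal (f m ℓ)
  have : IsProbabilityMeasure ν :=
    ⟨by rw [withDensity_apply _ .univ, Measure.restrict_univ]; exact hprob m⟩
  set X : ℝ := (m + 1) ^ (2 * (p + 2)) * 2 ^ (p + 2) / 2 ^ m
  have hFB : ∀ᵐ ℓ ∂ν, |F m ℓ ^ k - (∑ i ∈ range (p + 1), (m.choose i : ℝ)) ^ k| ≤
      (2 * (m + 1) ^ p) ^ k := by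
    filter_upwards [(withDensity_absolutelyContinuous _ _).ae_le (ae_mem_simplex m)] with ℓ hℓ
    exact abs_pow_sub_sum_range_choose_pow_le k (hFbd m ℓ hℓ).1 (hFbd m ℓ hℓ).2
  have hν : ν.real (Gamma m (p + 2))ᶜ ≤ A * b ^ (m + 1) * X :=
    ENNReal.toReal_le_of_le_ofReal (by positivity) (withDensity_compl_gamma_le (by omega) (hfΛ m))
  calc _ ≤ (2 * (m + 1) ^ p) ^ k * ν.real (Gamma m (p + 2))ᶜ :=
        abs_integral_sub_le_of_eqOn (measurableSet_gamma m _)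
          ((hFmeas m).pow_const k).aestronglyMeasurable hFB fun ℓ hℓ => by rw [hFconst m ℓ hℓ]
    _ ≤ (2 * (m + 1) ^ p) ^ k * (A * b ^ (m + 1) * X) := by gcongr
    _ = K * (((m + 1 : ℕ) : ℝ) ^ (p * k + 2 * (p + 2)) * (b / 2) ^ (m + 1)) := by
        rw [div_pow]; push_cast; ring
    _ ≤ K * (C * a ^ (m + 1)) := mul_le_mul_of_nonneg_left (hC (m + 1)) (by positivity)
    _ < (K * C + 1) * a ^ (m + 1) := by nlinarith [pow_pos ha (m + 1)]

/-- higher moments: under the same admissibility assumptions,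
with B_n = ∑_{i=0}^p C(n-1,i) and k ≥ 1,
|∫ F_n^k dν_n − B_n^k| < C·aⁿ for all n ≥ 3 (n = m+1). -/
theorem stmt17 (f : (m : ℕ) → (Fin (m+1) → ℝ) → ℝ)
    (hmeas : ∀ m, Measurable (f m))
    (hnonneg : ∀ m ℓ, 0 ≤ f m ℓ)
    (hprob : ∀ m, ∫⁻ ℓ, ENNReal.ofReal (f m ℓ) ∂(simplexProb m) = 1)
    (hadm : ∀ p : ℕ, 1 ≤ p → ∃ A > (0:ℝ), ∃ b ∈ Set.Ioo (0:ℝ) 2,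
        ∀ m : ℕ, ∀ ℓ ∈ Lambda m p, f m ℓ ≤ A * b^(m+1))
    (p k : ℕ) (hk : 1 ≤ k) (F : (m : ℕ) → (Fin (m+1) → ℝ) → ℝ)
    (hFmeas : ∀ m, Measurable (F m))
    (hFconst : ∀ m : ℕ, ∀ ℓ ∈ Gamma m (p+2),
        F m ℓ = ∑ i ∈ Finset.range (p+1), (Nat.choose m i : ℝ))
    (hFbd : ∀ m : ℕ, ∀ ℓ ∈ Simplex m, 0 ≤ F m ℓ ∧ F m ℓ ≤ 2 * (m:ℝ)^p) :
    ∃ C > (0:ℝ), ∃ a ∈ Set.Ioo (0:ℝ) 1, ∀ m : ℕ, 2 ≤ m →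
      |(∫ ℓ, (F m ℓ)^k
            ∂((simplexProb m).withDensity (fun ℓ => ENNReal.ofReal (f m ℓ))))
          - (∑ i ∈ Finset.range (p+1), (Nat.choose m i : ℝ))^k|
        < C * a^(m+1) :=
  stmt17_general f hprob hadm p k F hFmeas hFconst hFbd
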